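/- Let R be a K-graded ring and q: Spec_K(R) → Spec(R_0) the map sending a K-prime ideal p to p ∩ R_0. Then q is surjective and closed (with respect to the topologies whose closed sets are V(a) for graded resp. ordinary ideals a), and for any family of closed sets A_i ⊆ Spec_K(R) one has q(∩_i A_i) = ∩_i q(A_i). -/

import Mathlib

/-!
Over an ideal `𝔮` of `R₀` sits a largest homogeneous ideal `𝔮* = {x | (x y)₀ ∈ 𝔮 for all y}`.
It contracts to `𝔮`, and it is `K`-prime when `𝔮` is prime: if `a ∉ 𝔮*` and `b ∉ 𝔮*` are
homogeneous of degrees `k` and `m`, there are `u, v` of degrees `-k, -m` with `a u, b v ∉ 𝔮`,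
while `(a u)(b v) = (a b)(u v) ∈ 𝔮`. By maximality, for a homogeneous ideal `a` the prime `𝔮`
lies in `q(V(a))` iff `a ⊆ 𝔮*` iff `a ∩ R₀ ⊆ 𝔮`; so `q(V(a)) = V(a ∩ R₀)`, and a prime lying
in every `q(V(Aᵢ))` has `𝔮*` as a common preimage in `⋂ᵢ V(Aᵢ)`.
-/

section

variable {K R : Type*} [AddCommGroup K] [DecidableEq K] [CommRing R]
  (𝒜 : K → AddSubgroup R) [GradedRing 𝒜]

/-- A `K`-prime ideal: a proper (homogeneous) ideal such that a product of homogeneous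
elements lies in it only if one of the factors does. -/
def IsKPrime (p : Ideal R) : Prop :=
  Ideal.IsHomogeneous 𝒜 p ∧ p ≠ ⊤ ∧
    ∀ a b : R, SetLike.IsHomogeneousElem 𝒜 a → SetLike.IsHomogeneousElem 𝒜 b →
      a * b ∈ p → a ∈ p ∨ b ∈ p

/-- Contraction of an ideal of `R` to the degree zero subring `R₀`. -/
def contractToZero (a : Ideal R) : Ideal ↥(SetLike.GradeZero.subring 𝒜) :=
  Ideal.comap (SetLike.GradeZero.subring 𝒜).subtype a

open DirectSum

def gradeZeroProj : R →+ SetLike.GradeZero.subring 𝒜 :=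
  (GradedRing.proj 𝒜 0).codRestrict (SetLike.GradeZero.subring 𝒜)
    fun x => (decompose 𝒜 x 0).2

@[simp]
lemma coe_gradeZeroProj (x : R) : (gradeZeroProj 𝒜 x : R) = decompose 𝒜 x 0 := rfl

lemma coe_gradeZeroProj_of_mem_zero {x : R} (hx : x ∈ 𝒜 0) : (gradeZeroProj 𝒜 x : R) = x := by
  rw [coe_gradeZeroProj, decompose_of_mem_same 𝒜 hx]

lemma coe_gradeZeroProj_mul_of_mem {x : R} {k : K} (hx : x ∈ 𝒜 k) (y : R) :
    (gradeZeroProj 𝒜 (x * y) : R) = x * decompose 𝒜 y (-k) := by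
  rw [coe_gradeZeroProj, ← add_neg_cancel k, coe_decompose_mul_add_of_left_mem 𝒜 hx]

lemma coe_gradeZeroProj_mul_of_mem_right (x : R) {y : R} {k : K} (hy : y ∈ 𝒜 (-k)) :
    (gradeZeroProj 𝒜 (x * y) : R) = decompose 𝒜 x k * y := by
  rw [coe_gradeZeroProj, ← add_neg_cancel k, coe_decompose_mul_add_of_right_mem 𝒜 hy]

lemma contractToZero_isPrime {p : Ideal R} (hp : IsKPrime 𝒜 p) :
    (contractToZero 𝒜 p).IsPrime := by
  obtain ⟨-, hne, hmul⟩ := hp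
  refine ⟨fun h => hne ?_, fun {w₁ w₂} h => hmul _ _ ⟨0, w₁.2⟩ ⟨0, w₂.2⟩ h⟩
  exact Ideal.eq_top_of_isUnit_mem p (h ▸ Submodule.mem_top : (1 : _) ∈ contractToZero 𝒜 p)
    isUnit_one

def largestAbove (q : Ideal (SetLike.GradeZero.subring 𝒜)) : Ideal R where
  carrier := {x | ∀ y, gradeZeroProj 𝒜 (x * y) ∈ q}
  zero_mem' := by simp
  add_mem' := fun hx hy z => by simpa only [add_mul, map_add] using q.add_mem (hx z) (hy z)
  smul_mem' := fun c x hx y => by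
    rw [smul_eq_mul, mul_assoc, mul_left_comm]
    exact hx (c * y)

variable {𝒜} in
@[simp]
lemma mem_largestAbove {q : Ideal (SetLike.GradeZero.subring 𝒜)} {x : R} :
    x ∈ largestAbove 𝒜 q ↔ ∀ y, gradeZeroProj 𝒜 (x * y) ∈ q := Iff.rfl

lemma isHomogeneous_largestAbove (q : Ideal (SetLike.GradeZero.subring 𝒜)) :
    (largestAbove 𝒜 q).IsHomogeneous 𝒜 := fun i x hx y => by
  convert hx (decompose 𝒜 y (-i)) using 1
  ext
  rw [coe_gradeZeroProj_mul_of_mem 𝒜 (decompose 𝒜 x i).2,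
    coe_gradeZeroProj_mul_of_mem_right 𝒜 x (decompose 𝒜 y (-i)).2]

lemma contractToZero_largestAbove (q : Ideal (SetLike.GradeZero.subring 𝒜)) :
    contractToZero 𝒜 (largestAbove 𝒜 q) = q := by
  ext w
  change (∀ y, gradeZeroProj 𝒜 (w * y) ∈ q) ↔ w ∈ q
  have hw : (w : R) ∈ 𝒜 0 := w.2
  refine ⟨fun h => ?_, fun h y => ?_⟩
  · convert h 1
    ext
    rw [mul_one, coe_gradeZeroProj_of_mem_zero 𝒜 hw]
  · convert q.mul_mem_right (gradeZeroProj 𝒜 y) h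
    ext
    exact coe_decompose_mul_of_left_mem_zero 𝒜 hw

lemma le_largestAbove_iff {q : Ideal (SetLike.GradeZero.subring 𝒜)} {a : Ideal R}
    (ha : a.IsHomogeneous 𝒜) : a ≤ largestAbove 𝒜 q ↔ contractToZero 𝒜 a ≤ q := by
  refine ⟨fun h => contractToZero_largestAbove 𝒜 q ▸ Ideal.comap_mono h, fun h x hx y => ?_⟩
  exact h (ha 0 (a.mul_mem_right y hx))

lemma isKPrime_largestAbove {q : Ideal (SetLike.GradeZero.subring 𝒜)} (hq : q.IsPrime) :
    IsKPrime 𝒜 (largestAbove 𝒜 q) := by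
  refine ⟨isHomogeneous_largestAbove 𝒜 q, fun h => hq.ne_top ?_, ?_⟩
  · rw [← contractToZero_largestAbove 𝒜 q, h]
    exact Ideal.comap_top
  rintro a b ⟨k, ha⟩ ⟨m, hb⟩ hab
  by_contra! ⟨hna, hnb⟩
  rw [mem_largestAbove, not_forall] at hna hnb
  obtain ⟨u, hu⟩ := hna
  obtain ⟨v, hv⟩ := hnb
  set u' := (decompose 𝒜 u (-k) : R)
  set v' := (decompose 𝒜 v (-m) : R)
  have hau : a * u' ∈ 𝒜 0 := by simpa using SetLike.mul_mem_graded ha (decompose 𝒜 u (-k)).2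
  have hbv : b * v' ∈ 𝒜 0 := by simpa using SetLike.mul_mem_graded hb (decompose 𝒜 v (-m)).2
  have key : gradeZeroProj 𝒜 (a * u) * gradeZeroProj 𝒜 (b * v) =
      gradeZeroProj 𝒜 (a * b * (u' * v')) := by
    ext
    rw [Subring.coe_mul, coe_gradeZeroProj_mul_of_mem 𝒜 ha, coe_gradeZeroProj_mul_of_mem 𝒜 hb,
      show a * b * (u' * v') = a * u' * (b * v') by ring,
      coe_gradeZeroProj_of_mem_zero 𝒜 (by simpa using SetLike.mul_mem_graded hau hbv)]
  exact (hq.mem_or_mem (key ▸ hab (u' * v'))).elim hu hv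

lemma exists_isKPrime_contractToZero_eq_iff {q : Ideal (SetLike.GradeZero.subring 𝒜)}
    (hq : q.IsPrime) {a : Ideal R} (ha : a.IsHomogeneous 𝒜) :
    (∃ p : Ideal R, IsKPrime 𝒜 p ∧ a ≤ p ∧ contractToZero 𝒜 p = q) ↔ contractToZero 𝒜 a ≤ q := by
  refine ⟨fun ⟨p, _, hap, hpq⟩ => hpq ▸ Ideal.comap_mono hap, fun h => ?_⟩
  exact ⟨largestAbove 𝒜 q, isKPrime_largestAbove 𝒜 hq, (le_largestAbove_iff 𝒜 ha).2 h,
    contractToZero_largestAbove 𝒜 q⟩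

/-- The map `q : Spec_K(R) → Spec(R₀)`, `p ↦ p ∩ R₀`, is well defined (contractions
of `K`-primes are prime), surjective, closed (the image of a closed set `V(a)` for a graded ideal
`a` is a closed set of `Spec R₀`), and respects arbitrary intersections of closed sets. -/
theorem stmt_16 {ι : Type*} (A : ι → Ideal R) (hA : ∀ i, Ideal.IsHomogeneous 𝒜 (A i)) :
    -- well-definedness
    (∀ p : Ideal R, IsKPrime 𝒜 p → (contractToZero 𝒜 p).IsPrime) ∧
    -- surjectivity
    (∀ q : Ideal ↥(SetLike.GradeZero.subring 𝒜), q.IsPrime →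
      ∃ p : Ideal R, IsKPrime 𝒜 p ∧ contractToZero 𝒜 p = q) ∧
    -- closedness: q(V(a)) = V(b) inside Spec R₀
    (∀ a : Ideal R, Ideal.IsHomogeneous 𝒜 a →
      ∃ b : Ideal ↥(SetLike.GradeZero.subring 𝒜),
        ∀ q : Ideal ↥(SetLike.GradeZero.subring 𝒜), q.IsPrime →
          ((∃ p : Ideal R, IsKPrime 𝒜 p ∧ a ≤ p ∧ contractToZero 𝒜 p = q) ↔ b ≤ q)) ∧
    -- q(⋂ᵢ V(Aᵢ)) = ⋂ᵢ q(V(Aᵢ))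
    (∀ q : Ideal ↥(SetLike.GradeZero.subring 𝒜), q.IsPrime →
      ((∃ p : Ideal R, IsKPrime 𝒜 p ∧ (∀ i, A i ≤ p) ∧ contractToZero 𝒜 p = q) ↔
        ∀ i, ∃ p : Ideal R, IsKPrime 𝒜 p ∧ A i ≤ p ∧ contractToZero 𝒜 p = q)) := by
  refine ⟨fun p hp => contractToZero_isPrime 𝒜 hp,
    fun q hq => ⟨largestAbove 𝒜 q, isKPrime_largestAbove 𝒜 hq, contractToZero_largestAbove 𝒜 q⟩,
    fun a ha => ⟨contractToZero 𝒜 a, fun q hq => exists_isKPrime_contractToZero_eq_iff 𝒜 hq ha⟩,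
    fun q hq => ⟨fun ⟨p, hp, hAp, hpq⟩ i => ⟨p, hp, hAp i, hpq⟩, fun h => ?_⟩⟩
  have hle : ∀ i, A i ≤ largestAbove 𝒜 q := fun i =>
    (le_largestAbove_iff 𝒜 (hA i)).2 ((exists_isKPrime_contractToZero_eq_iff 𝒜 hq (hA i)).1 (h i))
  exact ⟨largestAbove 𝒜 q, isKPrime_largestAbove 𝒜 hq, hle, contractToZero_largestAbove 𝒜 q⟩

end
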